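/- Let M₁,...,Mₙ be i.i.d. nonnegative integer-valued random variables with common pgf φ, let u ∈ [0,1] and i ≥ 1. Then E[((M₁)_i / (Σ_{l=1}^n M_l)_i) · u^{Σ_{l=1}^n M_l}] = (u^i/Γ(i)) ∫₀¹ (1-z)^(i-1) φ(uz)^(n-1) φ^(i)(uz) dz. -/

import Mathlib

/-!
For a single configuration with `M₁ = m` and `∑ M_l = s`, the Beta integral
`∫₀¹ z^(s-i) (1-z)^(i-1) dz = (s-i)! (i-1)! / s!` rewrites `(m)_i / (s)_i · u^s` as
`u^i / (i-1)! · ∫₀¹ (1-z)^(i-1) (m)_i (uz)^(s-i) dz`. Everything is nonnegative, so summing over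
configurations commutes with the integral, and the resulting integrand is recognised through
`∑_f ∏_l p(f_l) · (f_1)_i w^(∑ f - i) = φ(w)^(n-1) φ^(i)(w)` for `0 ≤ w < 1`: the factor `φ^(i)`
comes from differentiating the power series of `φ` termwise `i` times.
-/

open MeasureTheory Set
open scoped Nat

theorem integral_pow_mul_one_sub_pow (k j : ℕ) :
    ∫ x in (0:ℝ)..1, x ^ k * (1 - x) ^ j = (k ! * j ! : ℝ) / (k + j + 1)! := by
  have h := Complex.Gamma_mul_Gamma_eq_betaIntegral (s := k + 1) (t := j + 1)
    (by simp; positivity) (by simp; positivity)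
  rw [Complex.betaIntegral,
    show (k + 1 + (j + 1) : ℂ) = ((k + j + 1 : ℕ) : ℂ) + 1 by push_cast; ring,
    Complex.Gamma_nat_eq_factorial, Complex.Gamma_nat_eq_factorial,
    Complex.Gamma_nat_eq_factorial] at h
  simp only [add_sub_cancel_right, Complex.cpow_natCast] at h
  norm_cast at h
  rw [intervalIntegral.integral_ofReal] at h
  rw [eq_div_iff (by positivity), mul_comm]
  exact_mod_cast h.symm

theorem integral_one_sub_pow_mul_descFactorial_mul_pow {i m s : ℕ} (hi : 1 ≤ i) (hms : m ≤ s)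
    (u : ℝ) :
    ∫ z in (0:ℝ)..1, (1 - z) ^ (i - 1) * ((m.descFactorial i : ℝ) * (u * z) ^ (s - i))
      = (i - 1)! * ((m.descFactorial i : ℝ) / s.descFactorial i) * u ^ (s - i) := by
  rcases Nat.lt_or_ge m i with hmi | hmi
  · simp [Nat.descFactorial_eq_zero_iff_lt.2 hmi]
  have hsi : i ≤ s := hmi.trans hms
  have hbeta := integral_pow_mul_one_sub_pow (s - i) (i - 1)
  rw [show s - i + (i - 1) + 1 = s by omega, ← Nat.factorial_mul_descFactorial hsi] at hbeta
  have hs : (s.descFactorial i : ℝ) ≠ 0 := mod_cast (Nat.descFactorial_pos.2 hsi).ne'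
  calc ∫ z in (0:ℝ)..1, (1 - z) ^ (i - 1) * ((m.descFactorial i : ℝ) * (u * z) ^ (s - i))
      = (m.descFactorial i * u ^ (s - i) : ℝ) *
          ∫ z in (0:ℝ)..1, z ^ (s - i) * (1 - z) ^ (i - 1) := by
        rw [← intervalIntegral.integral_const_mul]
        congr 1 with z
        ring
    _ = _ := by
        rw [hbeta]
        push_cast
        field_simp

theorem descFactorial_div_mul_pow_eq_integral {i m s : ℕ} (hi : 1 ≤ i) (hms : m ≤ s) (u : ℝ) :
    (m.descFactorial i : ℝ) / s.descFactorial i * u ^ s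
      = u ^ i / (i - 1)! *
        ∫ z in (0:ℝ)..1, (1 - z) ^ (i - 1) * ((m.descFactorial i : ℝ) * (u * z) ^ (s - i)) := by
  rw [integral_one_sub_pow_mul_descFactorial_mul_pow hi hms]
  rcases Nat.lt_or_ge m i with hmi | hmi
  · simp [Nat.descFactorial_eq_zero_iff_lt.2 hmi]
  · rw [← Nat.add_sub_of_le (hmi.trans hms), pow_add, Nat.add_sub_cancel_left]
    field_simp

theorem tsum_intervalIntegral_eq_of_nonneg {ι : Type*} [Countable ι] {F : ι → ℝ → ℝ} {a b : ℝ}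
    (hab : a ≤ b) (hF : ∀ k, IntervalIntegrable (F k) volume a b)
    (hF0 : ∀ k, ∀ z ∈ Ioo a b, 0 ≤ F k z) (hs : Summable fun k => ∫ z in a..b, F k z) :
    ∑' k, ∫ z in a..b, F k z = ∫ z in a..b, ∑' k, F k z := by
  simp only [intervalIntegral.integral_of_le hab, integral_Ioc_eq_integral_Ioo] at hs ⊢
  have hnorm : ∀ k, ∫ z in Ioo a b, ‖F k z‖ = ∫ z in Ioo a b, F k z := fun k =>
    setIntegral_congr_fun measurableSet_Ioo fun z hz => Real.norm_of_nonneg (hF0 k z hz)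
  exact integral_tsum_of_summable_integral_norm
    (fun k => (hF k).1.mono_set Ioo_subset_Ioc_self) (by simpa only [hnorm] using hs)

theorem summable_descFactorial_mul_pow (i : ℕ) {r : ℝ} (hr : |r| < 1) :
    Summable fun m : ℕ => (m.descFactorial i : ℝ) * r ^ (m - i) := by
  rw [← summable_nat_add_iff i]
  refine ((summable_choose_mul_geometric_of_norm_lt_one i (r := r) hr).mul_left (i ! : ℝ)).congr
    fun m => ?_
  rw [Nat.descFactorial_eq_factorial_mul_choose, Nat.add_sub_cancel]
  push_cast
  ring

theorem hasSum_pi_prod_of_nonneg {β : Type*} {n : ℕ} {h : Fin n → β → ℝ}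
    (h0 : ∀ l b, 0 ≤ h l b) (hs : ∀ l, Summable (h l)) :
    HasSum (fun f : Fin n → β => ∏ l, h l (f l)) (∏ l, ∑' b, h l b) := by
  induction n with
  | zero =>
    simp only [Finset.univ_eq_empty, Finset.prod_empty]
    exact hasSum_single (f := fun f : Fin 0 → β => ∏ l, h l (f l)) default
      fun f hf => (hf (Subsingleton.elim _ _)).elim
  | succ n ih =>
    have ih' : HasSum (fun g : Fin n → β => ∏ l, h l.succ (g l)) (∏ l : Fin n, ∑' b, h l.succ b) :=
      ih (fun l => h0 l.succ) (fun l => hs l.succ)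
    have hg0 : 0 ≤ fun g : Fin n → β => ∏ l, h l.succ (g l) :=
      fun g => Finset.prod_nonneg fun l _ => h0 l.succ (g l)
    have h00 : 0 ≤ h 0 := fun b => h0 0 b
    have hfg := Summable.mul_of_nonneg (hs 0) ih'.summable h00 hg0
    have hmul := HasSum.mul (hs 0).hasSum ih' hfg
    rw [Fin.prod_univ_succ, ← (Fin.consEquiv fun _ => β).hasSum_iff]
    refine hmul.congr_fun fun x => ?_
    simp [Fin.prod_univ_succ]

section PowerSeries

variable {a : ℕ → ℝ} {C : ℝ}

theorem norm_mul_descFactorial_mul_pow_le (ha : ∀ m, |a m| ≤ C) (k m : ℕ) {y r : ℝ}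
    (hy : |y| ≤ r) :
    ‖a m * ((m.descFactorial k : ℝ) * y ^ (m - k))‖
      ≤ C * ((m.descFactorial k : ℝ) * r ^ (m - k)) := by
  rw [Real.norm_eq_abs, abs_mul, abs_mul, abs_pow, Nat.abs_cast]
  gcongr
  · exact (abs_nonneg _).trans (ha m)
  · exact ha m

theorem summable_mul_descFactorial_mul_pow (ha : ∀ m, |a m| ≤ C) (i : ℕ) {r : ℝ} (hr : |r| < 1) :
    Summable fun m => a m * ((m.descFactorial i : ℝ) * r ^ (m - i)) :=
  .of_norm_bounded ((summable_descFactorial_mul_pow i (r := |r|) (by rwa [abs_abs])).mul_left C)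
    fun m => norm_mul_descFactorial_mul_pow_le ha i m le_rfl

theorem hasDerivAt_tsum_descFactorial_mul_pow (ha : ∀ m, |a m| ≤ C) (i : ℕ) {w : ℝ}
    (hw : |w| < 1) :
    HasDerivAt (fun y => ∑' m, a m * ((m.descFactorial i : ℝ) * y ^ (m - i)))
      (∑' m, a m * ((m.descFactorial (i + 1) : ℝ) * w ^ (m - (i + 1)))) w := by
  obtain ⟨r, hwr, hr1⟩ := exists_between hw
  have hr : |r| < 1 := by rwa [abs_of_nonneg ((abs_nonneg w).trans hwr.le)]
  have hmem : w ∈ Ioo (-r) r := abs_lt.1 hwr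
  refine hasDerivAt_tsum_of_isPreconnected ((summable_descFactorial_mul_pow (i + 1) hr).mul_left C)
    isOpen_Ioo isPreconnected_Ioo (fun m y _ => ?_)
    (fun m y hy => norm_mul_descFactorial_mul_pow_le ha (i + 1) m (abs_le.2 ⟨hy.1.le, hy.2.le⟩))
    hmem (summable_mul_descFactorial_mul_pow ha i hw) hmem
  refine (((hasDerivAt_pow (m - i) y).const_mul (m.descFactorial i : ℝ)).const_mul
    (a m)).congr_deriv ?_
  rw [Nat.descFactorial_succ, Nat.sub_sub]
  push_cast
  ring

theorem iteratedDeriv_tsum_mul_pow (ha : ∀ m, |a m| ≤ C) (i : ℕ) :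
    EqOn (iteratedDeriv i fun w => ∑' m, a m * w ^ m)
      (fun w => ∑' m, a m * ((m.descFactorial i : ℝ) * w ^ (m - i))) (Ioo (-1) 1) := by
  induction i with
  | zero => intro w _; simp
  | succ i ih =>
    intro w hw
    rw [iteratedDeriv_succ, (ih.eventuallyEq_of_mem (isOpen_Ioo.mem_nhds hw)).deriv_eq]
    exact (hasDerivAt_tsum_descFactorial_mul_pow ha i (abs_lt.2 hw)).deriv

theorem pow_mul_iteratedDeriv_tsum_eq_tsum_pi (ha0 : ∀ m, 0 ≤ a m) (ha : ∀ m, |a m| ≤ C)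
    {n : ℕ} (i : ℕ) (j : Fin n) {w : ℝ} (hw0 : 0 ≤ w) (hw1 : w < 1) :
    (∑' m, a m * w ^ m) ^ (n - 1) * iteratedDeriv i (fun w => ∑' m, a m * w ^ m) w
      = ∑' f : Fin n → ℕ, (∏ l, a (f l)) * ((f j).descFactorial i * w ^ (∑ l, f l - i)) := by
  classical
  have hw : |w| < 1 := by rwa [abs_of_nonneg hw0]
  set h : Fin n → ℕ → ℝ := fun l m =>
    if l = j then a m * ((m.descFactorial i : ℝ) * w ^ (m - i)) else a m * w ^ m
  have hsum : HasSum (fun f : Fin n → ℕ => ∏ l, h l (f l)) (∏ l, ∑' m, h l m) := by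
    refine hasSum_pi_prod_of_nonneg (fun l m => ?_) (fun l => ?_)
    · simp only [h]; split_ifs <;> exact mul_nonneg (ha0 m) (by positivity)
    · simp only [h]; split_ifs
      · exact summable_mul_descFactorial_mul_pow ha i hw
      · simpa using summable_mul_descFactorial_mul_pow ha 0 hw
  have hsplit : ∀ g : Fin n → ℝ, ∏ l, g l = g j * ∏ l ∈ Finset.univ.erase j, g l := fun g =>
    (Finset.mul_prod_erase _ _ (Finset.mem_univ j)).symm
  have hoff : ∀ l ∈ Finset.univ.erase j, ∀ m, h l m = a m * w ^ m := fun l hl m => by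
    simp [h, Finset.ne_of_mem_erase hl]
  have hj : ∀ m, h j m = a m * ((m.descFactorial i : ℝ) * w ^ (m - i)) := fun m => by simp [h]
  rw [iteratedDeriv_tsum_mul_pow ha i (abs_lt.1 hw)]
  calc (∑' m, a m * w ^ m) ^ (n - 1) * ∑' m, a m * ((m.descFactorial i : ℝ) * w ^ (m - i))
      = ∏ l, ∑' m, h l m := by
        rw [hsplit, Finset.prod_congr rfl fun l hl => tsum_congr (hoff l hl), Finset.prod_const,
          Finset.card_erase_of_mem (Finset.mem_univ j), Finset.card_univ, Fintype.card_fin,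
          tsum_congr hj, mul_comm]
    _ = ∑' f : Fin n → ℕ, ∏ l, h l (f l) := hsum.tsum_eq.symm
    _ = _ := tsum_congr fun f => ?_
  rw [hsplit, hsplit, Finset.prod_congr rfl fun l hl => hoff l hl (f l), Finset.prod_mul_distrib,
    Finset.prod_pow_eq_pow_sum, hj, ← Finset.add_sum_erase _ _ (Finset.mem_univ j)]
  rcases Nat.lt_or_ge (f j) i with hfi | hfi
  · simp [Nat.descFactorial_eq_zero_iff_lt.2 hfi]
  · rw [show f j + ∑ l ∈ Finset.univ.erase j, f l - i
        = f j - i + ∑ l ∈ Finset.univ.erase j, f l by omega, pow_add]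
    ring

end PowerSeries

theorem summable_integral_one_sub_pow_mul_descFactorial_mul_pow {a : ℕ → ℝ}
    (ha0 : ∀ m, 0 ≤ a m) (ha : Summable a) {n : ℕ} (j : Fin n) {i : ℕ} (hi : 1 ≤ i) {u : ℝ}
    (hu0 : 0 ≤ u) (hu1 : u ≤ 1) :
    Summable fun f : Fin n → ℕ => ∫ z in (0:ℝ)..1, (∏ l, a (f l)) *
      ((1 - z) ^ (i - 1) * (((f j).descFactorial i : ℝ) * (u * z) ^ (∑ l, f l - i))) := by
  have hprod0 : ∀ f : Fin n → ℕ, 0 ≤ ∏ l, a (f l) := fun f =>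
    Finset.prod_nonneg fun l _ => ha0 _
  have hprod : Summable fun f : Fin n → ℕ => ∏ l, a (f l) :=
    (hasSum_pi_prod_of_nonneg (fun _ => ha0) fun _ => ha).summable
  have hjs : ∀ f : Fin n → ℕ, f j ≤ ∑ l, f l := fun f =>
    Finset.single_le_sum (fun l _ => Nat.zero_le (f l)) (Finset.mem_univ j)
  have hint : ∀ f : Fin n → ℕ, ∫ z in (0:ℝ)..1, (∏ l, a (f l)) *
      ((1 - z) ^ (i - 1) * (((f j).descFactorial i : ℝ) * (u * z) ^ (∑ l, f l - i)))
        = (∏ l, a (f l)) * ((i - 1)! *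
          (((f j).descFactorial i : ℝ) / (∑ l, f l).descFactorial i) * u ^ (∑ l, f l - i)) :=
    fun f => by
      rw [intervalIntegral.integral_const_mul,
        integral_one_sub_pow_mul_descFactorial_mul_pow hi (hjs f)]
  refine .of_nonneg_of_le (fun f => ?_) (fun f => ?_) (hprod.mul_left ((i - 1)! : ℝ))
  · have := hprod0 f
    rw [hint]
    positivity
  · rw [hint]
    calc _ ≤ (∏ l, a (f l)) * ((i - 1)! * 1 * 1) := by
          gcongr
          · exact hprod0 f
          · exact div_le_one_of_le₀ (mod_cast Nat.descFactorial_le i (hjs f)) (by positivity)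
          · exact pow_le_one₀ hu0 hu1
      _ = _ := by ring

theorem tsum_descFactorial_div_mul_pow_eq_integral {a : ℕ → ℝ} (ha0 : ∀ m, 0 ≤ a m)
    (ha1 : ∀ m, a m ≤ 1) (ha : Summable a) {n : ℕ} (j : Fin n) {i : ℕ} (hi : 1 ≤ i) {u : ℝ}
    (hu0 : 0 ≤ u) (hu1 : u ≤ 1) :
    ∑' f : Fin n → ℕ, (∏ l, a (f l)) *
        (((f j).descFactorial i : ℝ) / (∑ l, f l).descFactorial i * u ^ (∑ l, f l))
      = u ^ i / (i - 1)! * ∫ z in (0:ℝ)..1, (1 - z) ^ (i - 1) *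
          (∑' m, a m * (u * z) ^ m) ^ (n - 1) *
            iteratedDeriv i (fun w => ∑' m, a m * w ^ m) (u * z) := by
  set G : (Fin n → ℕ) → ℝ → ℝ := fun f z => (∏ l, a (f l)) *
    ((1 - z) ^ (i - 1) * (((f j).descFactorial i : ℝ) * (u * z) ^ (∑ l, f l - i)))
  have hterm : ∀ f : Fin n → ℕ, (∏ l, a (f l)) *
      (((f j).descFactorial i : ℝ) / (∑ l, f l).descFactorial i * u ^ (∑ l, f l))
        = u ^ i / (i - 1)! * ∫ z in (0:ℝ)..1, G f z := fun f => by
    rw [intervalIntegral.integral_const_mul, descFactorial_div_mul_pow_eq_integral hi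
      (Finset.single_le_sum (fun l _ => Nat.zero_le (f l)) (Finset.mem_univ j))]
    ring
  have hG0 : ∀ f, ∀ z ∈ Ioo (0:ℝ) 1, 0 ≤ G f z := fun f z hz =>
    mul_nonneg (Finset.prod_nonneg fun l _ => ha0 _) <|
      mul_nonneg (pow_nonneg (by linarith [hz.2]) _) <|
        mul_nonneg (Nat.cast_nonneg _) (pow_nonneg (mul_nonneg hu0 hz.1.le) _)
  have hpt : EqOn (fun z => ∑' f, G f z) (fun z => (1 - z) ^ (i - 1) *
      (∑' m, a m * (u * z) ^ m) ^ (n - 1) * iteratedDeriv i (fun w => ∑' m, a m * w ^ m) (u * z))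
      (Ioo 0 1) := fun z hz => by
    have hw1 : u * z < 1 := (mul_le_of_le_one_left hz.1.le hu1).trans_lt hz.2
    have ha : ∀ m, |a m| ≤ 1 := fun m => (abs_of_nonneg (ha0 m)).trans_le (ha1 m)
    dsimp only
    rw [mul_assoc, pow_mul_iteratedDeriv_tsum_eq_tsum_pi ha0 ha i j (mul_nonneg hu0 hz.1.le) hw1,
      ← tsum_mul_left]
    exact tsum_congr fun f => by ring
  rw [tsum_congr hterm, tsum_mul_left, tsum_intervalIntegral_eq_of_nonneg zero_le_one
    (fun f => Continuous.intervalIntegrable (by fun_prop) _ _) hG0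
    (summable_integral_one_sub_pow_mul_descFactorial_mul_pow ha0 ha j hi hu0 hu1),
    intervalIntegral.integral_congr_Ioo_of_le zero_le_one hpt]

/-- For `M₁,...,Mₙ` i.i.d. with common pgf `φ`, `u ∈ [0,1]`, `i ≥ 1`:
`E[((M₁)_i/(ΣM_l)_i) u^{ΣM_l}] = (u^i/Γ(i)) ∫₀¹ (1-z)^(i-1) φ(uz)^(n-1) φ^(i)(uz) dz`. -/
theorem stmt_2 (p : PMF ℕ) (n i : ℕ) (hn : 1 ≤ n) (hi : 1 ≤ i)
    (u : ℝ) (hu : u ∈ Set.Icc (0:ℝ) 1) :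
    (∑' f : Fin n → ℕ, (∏ l, (p (f l)).toReal) *
        ((((f ⟨0, hn⟩).descFactorial i : ℝ) / ((∑ l, f l).descFactorial i : ℝ)) *
          u ^ (∑ l, f l)))
      = (u ^ i / (Nat.factorial (i - 1) : ℝ)) *
        ∫ z in (0:ℝ)..1, (1 - z) ^ (i - 1) *
          ((fun w => ∑' m : ℕ, (p m).toReal * w ^ m) (u * z)) ^ (n - 1) *
          iteratedDeriv i (fun w => ∑' m : ℕ, (p m).toReal * w ^ m) (u * z) :=
  tsum_descFactorial_div_mul_pow_eq_integral (fun _ => ENNReal.toReal_nonneg)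
    (fun m => by simpa using ENNReal.toReal_mono ENNReal.one_ne_top (p.coe_le_one m))
    (ENNReal.summable_toReal p.tsum_coe_ne_top) ⟨0, hn⟩ hi hu.1 hu.2
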